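/- arXiv:1004.4727 — 13 statements merged into one kernel-verified Lean document; each statement's English description precedes it below -/
import Mathlib

section
/- Every hereditary dominance relation D on finite strategic games is order independent: for every initial finite game G, all iterations of the reduction relation →_D starting in G that terminate (and all of them do, since strategy sets are finite and each step strictly shrinks the restriction) end in the same final restriction. -/
/-!
A finite strategic game: players `ι` (finite), each player `i` has a finite
nonempty strategy type `S i`.  A restriction is a family `R : ∀ i, Finset (S i)`
of nonempty strategy sets.  A dominance relation `D` assigns to every restriction
`R` the (finite) set `D R i ⊆ R i` of strategies of player `i` that are
`D`-dominated in `R`, such that `R i \ D R i` is nonempty.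
-/

/-- The reduction relation `R →_D R'`: `R ≠ R'`, `R' ⊆ R`, and every strategy
belonging to some `R j` but not to `R' j` is `D`-dominated in `R`. -/
def DStep {ι : Type*} {S : ι → Type*} [∀ i, DecidableEq (S i)]
    (D : (∀ i, Finset (S i)) → ∀ i, Finset (S i))
    (R R' : ∀ i, Finset (S i)) : Prop :=
  R ≠ R' ∧ (∀ i, R' i ⊆ R i) ∧ ∀ i, ∀ s ∈ R i, s ∉ R' i → s ∈ D R i

/-- **Theorem 1**: every hereditary dominance relation is order independent:
any two outcomes of iterating `→_D` from the initial game `G`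
(the full restriction `fun i => Finset.univ`) coincide. -/
theorem hereditary_dominance_order_independent
    {ι : Type*} [Fintype ι] {S : ι → Type*}
    [∀ i, Fintype (S i)] [∀ i, Nonempty (S i)] [∀ i, DecidableEq (S i)]
    (D : (∀ i, Finset (S i)) → ∀ i, Finset (S i))
    -- `D` is a dominance relation:
    (hsub : ∀ R : ∀ i, Finset (S i), (∀ i, (R i).Nonempty) → ∀ i, D R i ⊆ R i)
    (hne : ∀ R : ∀ i, Finset (S i), (∀ i, (R i).Nonempty) → ∀ i, (R i \ D R i).Nonempty)
    -- `D` is hereditary: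
    (hher : ∀ R R' : ∀ i, Finset (S i), (∀ i, (R i).Nonempty) → (∀ i, (R' i).Nonempty) →
      DStep D R R' → ∀ i, ∀ s ∈ R' i, s ∈ D R i → s ∈ D R' i) :
    -- order independence: any two outcomes of iterating `→_D` from `G` are equal
    ∀ R R' : ∀ i, Finset (S i),
      (Relation.ReflTransGen (DStep D) (fun _ => Finset.univ) R ∧ ∀ R'', ¬ DStep D R R'') →
      (Relation.ReflTransGen (DStep D) (fun _ => Finset.univ) R' ∧ ∀ R'', ¬ DStep D R' R'') →
      R = R' := by
  classical
  intro R₀ R₀' h h'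
  -- restricted relation carrying nonemptiness of the source
  set r : (∀ i, Finset (S i)) → (∀ i, Finset (S i)) → Prop :=
    fun R R' => (∀ i, (R i).Nonempty) ∧ DStep D R R' with hrdef
  -- a step preserves nonemptiness
  have nstep : ∀ R R' : ∀ i, Finset (S i), (∀ i, (R i).Nonempty) → DStep D R R' →
      ∀ i, (R' i).Nonempty := by
    intro R R' hR hst i
    obtain ⟨s, hs⟩ := hne R hR i
    rw [Finset.mem_sdiff] at hs
    refine ⟨s, ?_⟩
    by_contra hc
    exact hs.2 (hst.2.2 i s hs.1 hc)
  -- diamond: two reducts join at the intersection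
  have diamond : ∀ R R1 R2 : ∀ i, Finset (S i), (∀ i, (R i).Nonempty) →
      DStep D R R1 → DStep D R R2 →
      ∃ J : ∀ i, Finset (S i),
        (R1 = J ∨ DStep D R1 J) ∧ (R2 = J ∨ DStep D R2 J) := by
    intro R R1 R2 hR h1 h2
    refine ⟨fun i => R1 i ∩ R2 i, ?_, ?_⟩
    · by_cases hEq : R1 = fun i => R1 i ∩ R2 i
      · exact Or.inl hEq
      · refine Or.inr ⟨hEq, fun i => Finset.inter_subset_left, ?_⟩
        intro i s hs hns
        have hs2 : s ∉ R2 i := fun h2' => hns (Finset.mem_inter.2 ⟨hs, h2'⟩)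
        have hsR : s ∈ R i := h1.2.1 i hs
        have hD : s ∈ D R i := h2.2.2 i s hsR hs2
        exact hher R R1 hR (nstep R R1 hR h1) h1 i s hs hD
    · by_cases hEq : R2 = fun i => R1 i ∩ R2 i
      · exact Or.inl hEq
      · refine Or.inr ⟨hEq, fun i => Finset.inter_subset_right, ?_⟩
        intro i s hs hns
        have hs1 : s ∉ R1 i := fun h1' => hns (Finset.mem_inter.2 ⟨h1', hs⟩)
        have hsR : s ∈ R i := h2.2.1 i hs
        have hD : s ∈ D R i := h1.2.2 i s hsR hs1
        exact hher R R2 hR (nstep R R2 hR h2) h2 i s hs hD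
  -- church-rosser hypothesis for r
  have cr : ∀ a b c : ∀ i, Finset (S i), r a b → r a c →
      ∃ d, Relation.ReflGen r b d ∧ Relation.ReflTransGen r c d := by
    intro a b c hab hac
    obtain ⟨J, hbJ, hcJ⟩ := diamond a b c hab.1 hab.2 hac.2
    refine ⟨J, ?_, ?_⟩
    · rcases hbJ with rfl | hbJ
      · exact Relation.ReflGen.refl
      · exact Relation.ReflGen.single ⟨nstep a b hab.1 hab.2, hbJ⟩
    · rcases hcJ with rfl | hcJ
      · exact Relation.ReflTransGen.refl
      · exact Relation.ReflTransGen.single ⟨nstep a c hac.1 hac.2, hcJ⟩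
  -- reachability from univ transfers to r, carrying nonemptiness
  have univne : ∀ i : ι, (Finset.univ : Finset (S i)).Nonempty :=
    fun i => Finset.univ_nonempty
  have reach : ∀ R : ∀ i, Finset (S i),
      Relation.ReflTransGen (DStep D) (fun _ => Finset.univ) R →
      Relation.ReflTransGen r (fun _ => Finset.univ) R ∧ ∀ i, (R i).Nonempty := by
    intro R hR
    induction hR with
    | refl => exact ⟨Relation.ReflTransGen.refl, univne⟩
    | tail hmid hstep ih =>
      exact ⟨ih.1.tail ⟨ih.2, hstep⟩, nstep _ _ ih.2 hstep⟩
  obtain ⟨hreachR, _⟩ := reach R₀ h.1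
  obtain ⟨hreachR', _⟩ := reach R₀' h'.1
  obtain ⟨d, hd1, hd2⟩ := Relation.church_rosser cr hreachR hreachR'
  have normal : ∀ (X d : ∀ i, Finset (S i)), (∀ R'', ¬ DStep D X R'') →
      Relation.ReflTransGen r X d → X = d := by
    intro X d hX hXd
    rcases hXd.cases_head with rfl | ⟨c, hc, _⟩
    · rfl
    · exact absurd hc.2 (hX c)
  rw [normal R₀ d h.2 hd1, normal R₀' d h'.2 hd2]
end

section
/- If a dominance relation D is hereditary, then the reduction relation →_D is weakly confluent: whenever R →_D R' and R →_D R'' , there exists a restriction R''' such that R' →*_D R''' and R'' →*_D R''' (where →*_D is the reflexive transitive closure of →_D). In fact, letting R* be the restriction of R obtained by removing from R all strategies that are D-dominated in R, every R' with R →_D R' satisfies R' →*_D R*. -/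
/-- If the dominance relation `D` is hereditary then `→_D` is weakly confluent;
in fact, letting `R*` be obtained from `R` by removing all strategies `D`-dominated
in `R`, every `R'` with `R →_D R'` satisfies `R' →*_D R*`. -/
theorem hereditary_weakly_confluent
    {ι : Type*} [Fintype ι] {S : ι → Type*}
    [∀ i, Fintype (S i)] [∀ i, Nonempty (S i)] [∀ i, DecidableEq (S i)]
    (D : (∀ i, Finset (S i)) → ∀ i, Finset (S i))
    -- `D` is a dominance relation:
    (hsub : ∀ R : ∀ i, Finset (S i), (∀ i, (R i).Nonempty) → ∀ i, D R i ⊆ R i)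
    (hne : ∀ R : ∀ i, Finset (S i), (∀ i, (R i).Nonempty) → ∀ i, (R i \ D R i).Nonempty)
    -- `D` is hereditary:
    (hher : ∀ R R' : ∀ i, Finset (S i), (∀ i, (R i).Nonempty) → (∀ i, (R' i).Nonempty) →
      DStep D R R' → ∀ i, ∀ s ∈ R' i, s ∈ D R i → s ∈ D R' i) :
    -- every `R'` with `R →_D R'` satisfies `R' →*_D R*` where `R* = R \ D R`:
    (∀ R R' : ∀ i, Finset (S i), (∀ i, (R i).Nonempty) → DStep D R R' →
      Relation.ReflTransGen (DStep D) R' (fun i => R i \ D R i)) ∧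
    -- hence `→_D` is weakly confluent:
    (∀ R R' R'' : ∀ i, Finset (S i), (∀ i, (R i).Nonempty) →
      DStep D R R' → DStep D R R'' →
      ∃ R''' : ∀ i, Finset (S i),
        Relation.ReflTransGen (DStep D) R' R''' ∧
        Relation.ReflTransGen (DStep D) R'' R''') := by
  have key : ∀ R R' : ∀ i, Finset (S i), (∀ i, (R i).Nonempty) → DStep D R R' →
      Relation.ReflTransGen (DStep D) R' (fun i => R i \ D R i) := by
    intro R R' hR hstep
    set Rs : ∀ i, Finset (S i) := fun i => R i \ D R i with hRs
    have hRsNe : ∀ i, (Rs i).Nonempty := fun i => hne R hR i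
    have hsubs : ∀ i, Rs i ⊆ R' i := by
      intro i s hs
      rw [hRs, Finset.mem_sdiff] at hs
      by_contra h
      exact hs.2 (hstep.2.2 i s hs.1 h)
    have hR'Ne : ∀ i, (R' i).Nonempty := fun i => (hRsNe i).mono (hsubs i)
    by_cases heq : R' = Rs
    · rw [heq]
    · refine Relation.ReflTransGen.single ⟨heq, hsubs, ?_⟩
      intro i s hsR' hsNot
      have hsR : s ∈ R i := hstep.2.1 i hsR'
      have hsD : s ∈ D R i := by
        by_contra h
        exact hsNot (by rw [hRs]; exact Finset.mem_sdiff.mpr ⟨hsR, h⟩)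
      exact hher R R' hR hR'Ne hstep i s hsR' hsD
  exact ⟨key, fun R R' R'' hR h1 h2 => ⟨_, key R R' hR h1, key R R'' hR h2⟩⟩
end

section
/- Strict dominance by a pure strategy is a hereditary dominance relation: if R →_S R' is a reduction step eliminating only strategies strictly dominated in R, and a strategy s_i present in R' is strictly dominated in R, then s_i is strictly dominated in R'. -/
/-- `s'` strictly dominates `s` (for player `i`) in the restriction `R`.
Joint strategies of the opponents are encoded as full profiles `σ` whose
coordinates `j ≠ i` lie in `R j`. -/
def SDominates {ι : Type*} [DecidableEq ι] {S : ι → Type*}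
    (p : ι → (∀ j, S j) → ℝ) (R : ∀ j, Finset (S j)) (i : ι) (s' s : S i) : Prop :=
  ∀ σ : ∀ j, S j, (∀ j, j ≠ i → σ j ∈ R j) →
    p i (Function.update σ i s) < p i (Function.update σ i s')

/-- `s` is strictly dominated in `R`: some `s' ∈ R i` strictly dominates it. -/
def SDominated {ι : Type*} [DecidableEq ι] {S : ι → Type*}
    (p : ι → (∀ j, S j) → ℝ) (R : ∀ j, Finset (S j)) (i : ι) (s : S i) : Prop :=
  ∃ s' ∈ R i, SDominates p R i s' s

/-- The reduction relation `R →_S R'` of elimination of strictly dominated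
strategies. -/
def StepS {ι : Type*} [DecidableEq ι] {S : ι → Type*}
    (p : ι → (∀ j, S j) → ℝ) (R R' : ∀ j, Finset (S j)) : Prop :=
  R ≠ R' ∧ (∀ j, R' j ⊆ R j) ∧ ∀ j, ∀ s ∈ R j, s ∉ R' j → SDominated p R j s

/-- Strict dominance by a pure strategy is hereditary: if `R →_S R'` and a
strategy present in `R'` is strictly dominated in `R`, then it is strictly
dominated in `R'`. -/
theorem strict_dominance_hereditary
    {ι : Type*} [Fintype ι] [DecidableEq ι] {S : ι → Type*}
    [∀ i, Fintype (S i)] [∀ i, Nonempty (S i)]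
    (p : ι → (∀ j, S j) → ℝ) (R R' : ∀ j, Finset (S j))
    (hR : ∀ j, (R j).Nonempty) (hR' : ∀ j, (R' j).Nonempty)
    (hstep : StepS p R R')
    (i : ι) (s : S i) (hs : s ∈ R' i) (hdom : SDominated p R i s) :
    SDominated p R' i s := by
  classical
  obtain ⟨_, hsub, helim⟩ := hstep
  -- total payoff over all opponent profiles in R
  set F : S i → ℝ := fun t => ∑ σ ∈ Fintype.piFinset R, p i (Function.update σ i t) with hF
  -- the set of dominators of s in R
  set D : Finset (S i) := (R i).filter (fun t => SDominates p R i t s) with hD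
  have hDne : D.Nonempty := by
    obtain ⟨s', hs', hd⟩ := hdom
    exact ⟨s', by simp [hD, hs', hd]⟩
  have hpi : (Fintype.piFinset R).Nonempty := Fintype.piFinset_nonempty.2 hR
  -- domination implies strict increase of F
  have hFlt : ∀ a b : S i, SDominates p R i a b → F b < F a := by
    intro a b hab
    apply Finset.sum_lt_sum_of_nonempty hpi
    intro σ hσ
    exact hab σ (fun j _ => Fintype.mem_piFinset.1 hσ j)
  obtain ⟨t, htD, htmax⟩ := D.exists_max_image F hDne
  have htR : t ∈ R i := (Finset.mem_filter.1 htD).1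
  have htdom : SDominates p R i t s := (Finset.mem_filter.1 htD).2
  have htR' : t ∈ R' i := by
    by_contra htn
    obtain ⟨u, huR, hud⟩ := helim i t htR htn
    have huD : u ∈ D := by
      refine Finset.mem_filter.2 ⟨huR, ?_⟩
      intro σ hσ
      exact (htdom σ hσ).trans (hud σ hσ)
    exact absurd (htmax u huD) (not_le.2 (hFlt u t hud))
  exact ⟨t, htR', fun σ hσ => htdom σ (fun j hj => hsub j (hσ j hj))⟩
end

section
/- Iterated elimination of strategies strictly dominated by pure strategies in a finite strategic game is order independent: all iterations of →_S starting in the initial game G end in the same final restriction. -/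
-- A maximal element above `s` for a transitive irreflexive relation on a
-- finite set.
open Classical in
lemma exists_max_above {α : Type*} (D : α → α → Prop)
    (Dtrans : ∀ a b c, D a b → D b c → D a c) (Dirr : ∀ a, ¬ D a a)
    (A : Finset α) :
    ∀ n (s : α), (A.filter fun v => D v s).card ≤ n → s ∈ A →
      ∃ t ∈ A, (t = s ∨ D t s) ∧ ∀ u ∈ A, ¬ D u t := by
  classical
  intro n
  induction n with
  | zero =>
    intro s hcard hs
    refine ⟨s, hs, Or.inl rfl, ?_⟩
    intro u hu hDu
    have : u ∈ A.filter fun v => D v s := Finset.mem_filter.2 ⟨hu, hDu⟩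
    have := Finset.card_pos.2 ⟨u, this⟩
    omega
  | succ n ih =>
    intro s hcard hs
    by_cases h : ∃ u ∈ A, D u s
    · obtain ⟨u, hu, hDu⟩ := h
      have hss : (A.filter fun v => D v u) ⊂ (A.filter fun v => D v s) := by
        constructor
        · intro v hv
          rcases Finset.mem_filter.1 hv with ⟨hvA, hvD⟩
          exact Finset.mem_filter.2 ⟨hvA, Dtrans _ _ _ hvD hDu⟩
        · intro hsub
          have : u ∈ A.filter fun v => D v u :=
            hsub (Finset.mem_filter.2 ⟨hu, hDu⟩)
          exact Dirr u (Finset.mem_filter.1 this).2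
      have hlt := Finset.card_lt_card hss
      obtain ⟨t, htA, htu, htmax⟩ := ih u (by omega) hu
      refine ⟨t, htA, Or.inr ?_, htmax⟩
      rcases htu with rfl | hD
      · exact hDu
      · exact Dtrans _ _ _ hD hDu
    · refine ⟨s, hs, Or.inl rfl, ?_⟩
      intro u hu hDu
      exact h ⟨u, hu, hDu⟩

section Game

variable {ι : Type*} [DecidableEq ι] {S : ι → Type*}
  (p : ι → (∀ j, S j) → ℝ)

/-- One elimination step preserves nonemptiness of each strategy set. -/
lemma step_nonempty {R R₁ : ∀ j, Finset (S j)} (h : StepS p R R₁)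
    (hg : ∀ k, (R k).Nonempty) : ∀ k, (R₁ k).Nonempty := by
  intro j
  classical
  set σ0 : ∀ k, S k := fun k => (hg k).choose with hσ0
  have hσ0mem : ∀ k, σ0 k ∈ R k := fun k => (hg k).choose_spec
  set D : S j → S j → Prop := fun t u => SDominates p R j t u with hD
  have Dtrans : ∀ a b c, D a b → D b c → D a c := by
    intro a b c hab hbc σ hσ
    exact lt_trans (hbc σ hσ) (hab σ hσ)
  have Dirr : ∀ a, ¬ D a a := by
    intro a ha
    exact lt_irrefl _ (ha σ0 fun k _ => hσ0mem k)
  obtain ⟨t, htA, _, htmax⟩ :=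
    exists_max_above D Dtrans Dirr (R j)
      ((R j).filter fun v => D v ((hg j).choose)).card ((hg j).choose)
      le_rfl (hσ0mem j)
  refine ⟨t, ?_⟩
  by_contra htno
  obtain ⟨u, hu, hDu⟩ := h.2.2 j t htA htno
  exact htmax u hu hDu

/-- Key persistence lemma: a strategy surviving one elimination step that was
strictly dominated before the step is still strictly dominated after it. -/
lemma step_preserve {R R₁ : ∀ j, Finset (S j)} (h : StepS p R R₁)
    (hg : ∀ k, (R₁ k).Nonempty) {j : ι} {s : S j} (hs : s ∈ R₁ j)
    (hd : SDominated p R j s) : SDominated p R₁ j s := by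
  classical
  set σ0 : ∀ k, S k := fun k => (hg k).choose with hσ0
  have hσ0mem : ∀ k, σ0 k ∈ R₁ k := fun k => (hg k).choose_spec
  set D : S j → S j → Prop := fun t u => SDominates p R₁ j t u with hD
  have Dtrans : ∀ a b c, D a b → D b c → D a c := by
    intro a b c hab hbc σ hσ
    exact lt_trans (hbc σ hσ) (hab σ hσ)
  have Dirr : ∀ a, ¬ D a a := by
    intro a ha
    exact lt_irrefl _ (ha σ0 fun k _ => hσ0mem k)
  -- strict dominance over `R` implies it over the smaller `R₁`
  have mono : ∀ t u : S j, SDominates p R j t u → D t u := by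
    intro t u ht σ hσ
    exact ht σ fun k hk => h.2.1 k (hσ k hk)
  obtain ⟨s', hs'R, hs'dom⟩ := hd
  have hDs' : D s' s := mono _ _ hs'dom
  obtain ⟨t, htA, hts', htmax⟩ :=
    exists_max_above D Dtrans Dirr (R j)
      ((R j).filter fun v => D v s').card s' le_rfl hs'R
  have htR₁ : t ∈ R₁ j := by
    by_contra htno
    obtain ⟨u, hu, hDu⟩ := h.2.2 j t htA htno
    exact htmax u hu (mono _ _ hDu)
  have hDts : D t s := by
    rcases hts' with rfl | hD'
    · exact hDs'
    · exact Dtrans _ _ _ hD' hDs'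
  exact ⟨t, htR₁, hDts⟩

end Game

/-- Iterated elimination of strategies strictly dominated by pure strategies in
a finite strategic game is order independent: any two outcomes of iterating
`→_S` from the initial game `G` (the full restriction) coincide. -/
theorem strict_dominance_order_independent
    {ι : Type*} [Fintype ι] [DecidableEq ι] {S : ι → Type*}
    [∀ i, Fintype (S i)] [∀ i, Nonempty (S i)]
    (p : ι → (∀ j, S j) → ℝ) :
    ∀ R R' : ∀ j, Finset (S j),
      (Relation.ReflTransGen (StepS p) (fun _ => Finset.univ) R ∧ ∀ R'', ¬ StepS p R R'') →
      (Relation.ReflTransGen (StepS p) (fun _ => Finset.univ) R' ∧ ∀ R'', ¬ StepS p R' R'') →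
      R = R' := by
  classical
  -- the restricted relation: a step starting from a restriction with all
  -- components nonempty
  set r : (∀ j, Finset (S j)) → (∀ j, Finset (S j)) → Prop :=
    fun R R' => StepS p R R' ∧ ∀ k, (R k).Nonempty with hr
  -- reachability for `StepS` from the full game gives reachability for `r`
  -- together with nonemptiness
  have reach : ∀ R : ∀ j, Finset (S j),
      Relation.ReflTransGen (StepS p) (fun _ => Finset.univ) R →
      (∀ k, (R k).Nonempty) ∧
        Relation.ReflTransGen r (fun _ => Finset.univ) R := by
    intro R h
    induction h with
    | refl => exact ⟨fun k => ⟨Classical.arbitrary _, Finset.mem_univ _⟩,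
        Relation.ReflTransGen.refl⟩
    | tail h1 h2 ih =>
      exact ⟨step_nonempty p h2 ih.1, ih.2.tail ⟨h2, ih.1⟩⟩
  -- a half of the local confluence construction
  have join_step : ∀ a b c : ∀ j, Finset (S j), StepS p a b → StepS p a c →
      (∀ k, (b k).Nonempty) →
      b = (fun k => b k ∩ c k) ∨ StepS p b (fun k => b k ∩ c k) := by
    intro a b c hab hac hgb
    by_cases hbd : b = fun k => b k ∩ c k
    · exact Or.inl hbd
    · refine Or.inr ⟨hbd, fun j => Finset.inter_subset_left, ?_⟩
      intro j s hsb hsd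
      have hsc : s ∉ c j := fun hsc => hsd (Finset.mem_inter.2 ⟨hsb, hsc⟩)
      have hsa : s ∈ a j := hab.2.1 j hsb
      have hdom : SDominated p a j s := hac.2.2 j s hsa hsc
      exact step_preserve p hab hgb hsb hdom
  -- local strong confluence of `r`
  have confl : ∀ a b c : ∀ j, Finset (S j), r a b → r a c →
      ∃ d, Relation.ReflGen r b d ∧ Relation.ReflTransGen r c d := by
    intro a b c hab hac
    have hga := hab.2
    have hgb := step_nonempty p hab.1 hga
    have hgc := step_nonempty p hac.1 hga
    refine ⟨fun k => b k ∩ c k, ?_, ?_⟩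
    · rcases join_step a b c hab.1 hac.1 hgb with heq | hstep
      · rw [← heq]
      · exact Relation.ReflGen.single ⟨hstep, hgb⟩
    · have hcomm : (fun k => c k ∩ b k) = (fun k => b k ∩ c k) := by
        funext k; exact Finset.inter_comm _ _
      rcases join_step a c b hac.1 hab.1 hgc with heq | hstep
      · rw [← hcomm, ← heq]
      · exact Relation.ReflTransGen.single ⟨hcomm ▸ hstep, hgc⟩
  intro R R' hR hR'
  obtain ⟨d, hRd, hR'd⟩ :=
    Relation.church_rosser confl (reach R hR.1).2 (reach R' hR'.1).2
  have final : ∀ T d : ∀ j, Finset (S j), (∀ R'', ¬ StepS p T R'') →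
      Relation.ReflTransGen r T d → T = d := by
    intro T d hterm h
    rcases h.cases_head with heq | ⟨c, hc, _⟩
    · exact heq
    · exact absurd hc.1 (hterm c)
  rw [final R d hR.2 hRd, final R' d hR'.2 hR'd]
end

section
/- Being a never best response with respect to pure-strategy beliefs is a hereditary dominance relation: if R →_N R' is a reduction step eliminating only strategies that are never best responses in R, and a strategy s_i present in R' is a never best response in R, then s_i is a never best response in R'. -/
/-- `s` is a never best response in `R` with respect to pure-strategy beliefs:
against every joint strategy of the opponents from `R` (encoded as a full
profile `σ` with `σ j ∈ R j` for `j ≠ i`), some `s' ∈ R i` gives a strictly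
higher payoff than `s`. -/
def NeverBestResponse {ι : Type*} [DecidableEq ι] {S : ι → Type*}
    (p : ι → (∀ j, S j) → ℝ) (R : ∀ j, Finset (S j)) (i : ι) (s : S i) : Prop :=
  ∀ σ : ∀ j, S j, (∀ j, j ≠ i → σ j ∈ R j) →
    ∃ s' ∈ R i, p i (Function.update σ i s) < p i (Function.update σ i s')

/-- The reduction relation `R →_N R'` of elimination of never best responses. -/
def StepN {ι : Type*} [DecidableEq ι] {S : ι → Type*}
    (p : ι → (∀ j, S j) → ℝ) (R R' : ∀ j, Finset (S j)) : Prop :=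
  R ≠ R' ∧ (∀ j, R' j ⊆ R j) ∧ ∀ j, ∀ s ∈ R j, s ∉ R' j → NeverBestResponse p R j s

/-- Being a never best response w.r.t. pure-strategy beliefs is hereditary. -/
theorem never_best_response_hereditary
    {ι : Type*} [Fintype ι] [DecidableEq ι] {S : ι → Type*}
    [∀ i, Fintype (S i)] [∀ i, Nonempty (S i)]
    (p : ι → (∀ j, S j) → ℝ) (R R' : ∀ j, Finset (S j))
    (hR : ∀ j, (R j).Nonempty) (hR' : ∀ j, (R' j).Nonempty)
    (hstep : StepN p R R')
    (i : ι) (s : S i) (hs : s ∈ R' i) (hnbr : NeverBestResponse p R i s) :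
    NeverBestResponse p R' i s := by
  obtain ⟨-, hsub, helim⟩ := hstep
  intro σ hσ
  have hσR : ∀ j, j ≠ i → σ j ∈ R j := fun j hj => hsub j (hσ j hj)
  -- take a maximizer of the payoff over R i
  obtain ⟨t, htR, htmax⟩ := (R i).exists_max_image (fun t => p i (Function.update σ i t)) (hR i)
  have htR' : t ∈ R' i := by
    by_contra ht
    obtain ⟨s'', hs''R, hlt⟩ := helim i t htR ht σ hσR
    exact absurd (htmax s'' hs''R) (not_le.mpr hlt)
  obtain ⟨s', hs'R, hlt⟩ := hnbr σ hσR
  exact ⟨t, htR', lt_of_lt_of_le hlt (htmax s' hs'R)⟩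
end

section
/- Being a never best response with respect to correlated beliefs is a hereditary dominance relation: if R →_N R' is a reduction step eliminating only strategies that are never best responses in R, and a strategy s_i present in R' is a never best response in R, then s_i is a never best response in R'. -/
open Finset

/-- A correlated belief of player `i` in the restriction `R`: a probability
distribution over the joint strategies of the opponents taken from `R`,
encoded as a distribution `μ` on full profiles supported on profiles `σ`
with `σ j ∈ R j` for all `j ≠ i`. -/
def CorrBelief {ι : Type*} [Fintype ι] [DecidableEq ι] {S : ι → Type*} [∀ i, Fintype (S i)]
    (R : ∀ j, Finset (S j)) (i : ι) (μ : (∀ j, S j) → ℝ) : Prop :=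
  (∀ σ, 0 ≤ μ σ) ∧ (∀ σ, μ σ ≠ 0 → ∀ j, j ≠ i → σ j ∈ R j) ∧
    (∑ σ : ∀ j, S j, μ σ) = 1

/-- Expected payoff of `s` for player `i` against the belief `μ`. -/
def ExpPay {ι : Type*} [Fintype ι] [DecidableEq ι] {S : ι → Type*} [∀ i, Fintype (S i)]
    (p : ι → (∀ j, S j) → ℝ) (i : ι) (μ : (∀ j, S j) → ℝ) (s : S i) : ℝ :=
  ∑ σ : ∀ j, S j, μ σ * p i (Function.update σ i s)

/-- `s` is a never best response in `R` w.r.t. correlated beliefs: for every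
correlated belief `μ` on `R₋ᵢ` some `s' ∈ R i` has a strictly higher expected
payoff. -/
def CNeverBestResponse {ι : Type*} [Fintype ι] [DecidableEq ι] {S : ι → Type*}
    [∀ i, Fintype (S i)]
    (p : ι → (∀ j, S j) → ℝ) (R : ∀ j, Finset (S j)) (i : ι) (s : S i) : Prop :=
  ∀ μ : (∀ j, S j) → ℝ, CorrBelief R i μ →
    ∃ s' ∈ R i, ExpPay p i μ s < ExpPay p i μ s'

/-- The reduction relation `R →_N R'` of elimination of never best responses
w.r.t. correlated beliefs. -/
def StepCN {ι : Type*} [Fintype ι] [DecidableEq ι] {S : ι → Type*}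
    [∀ i, Fintype (S i)]
    (p : ι → (∀ j, S j) → ℝ) (R R' : ∀ j, Finset (S j)) : Prop :=
  R ≠ R' ∧ (∀ j, R' j ⊆ R j) ∧ ∀ j, ∀ s ∈ R j, s ∉ R' j → CNeverBestResponse p R j s

/-- Being a never best response w.r.t. correlated beliefs is hereditary. -/
theorem corr_never_best_response_hereditary
    {ι : Type*} [Fintype ι] [DecidableEq ι] {S : ι → Type*}
    [∀ i, Fintype (S i)] [∀ i, Nonempty (S i)]
    (p : ι → (∀ j, S j) → ℝ) (R R' : ∀ j, Finset (S j))
    (hR : ∀ j, (R j).Nonempty) (hR' : ∀ j, (R' j).Nonempty)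
    (hstep : StepCN p R R')
    (i : ι) (s : S i) (hs : s ∈ R' i) (hnbr : CNeverBestResponse p R i s) :
    CNeverBestResponse p R' i s := by
  intro μ hμ
  have hμR : CorrBelief R i μ :=
    ⟨hμ.1, fun σ h j hj => hstep.2.1 j (hμ.2.1 σ h j hj), hμ.2.2⟩
  obtain ⟨t, htR, htmax⟩ := Finset.exists_max_image (R i) (ExpPay p i μ) (hR i)
  have htR' : t ∈ R' i := by
    by_contra ht
    obtain ⟨s'', hs'', hlt⟩ := hstep.2.2 i t htR ht μ hμR
    exact absurd (htmax s'' hs'') (not_le.2 hlt)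
  obtain ⟨s', hs', hlt⟩ := hnbr μ hμR
  exact ⟨t, htR', lt_of_lt_of_le hlt (htmax s' hs')⟩
end

section
/- Property (a) of strict dominance by mixed strategies: let R be a restriction, s_i ∈ R_i a strategy of player i, m_i a mixed strategy of player i over R_i, and α ∈ (0,1]. If s_i is strictly dominated in R by the mixed strategy (1−α)·δ_{s_i} + α·m_i (the convex combination of the point mass at s_i and m_i), then s_i is strictly dominated in R by m_i. -/
open Finset

/-- A mixed strategy of player `i` over `R i`: a probability distribution on
`S i` supported on `R i`. -/
def Mixed {ι : Type*} {S : ι → Type*} [∀ i, Fintype (S i)]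
    (R : ∀ j, Finset (S j)) (i : ι) (m : S i → ℝ) : Prop :=
  (∀ t, 0 ≤ m t) ∧ (∀ t, m t ≠ 0 → t ∈ R i) ∧ (∑ t : S i, m t) = 1

/-- Expected payoff of the mixed strategy `m` of player `i` against the joint
strategy of the opponents encoded by the profile `σ`. -/
def MixPay {ι : Type*} [DecidableEq ι] {S : ι → Type*} [∀ i, Fintype (S i)]
    (p : ι → (∀ j, S j) → ℝ) (i : ι) (m : S i → ℝ) (σ : ∀ j, S j) : ℝ :=
  ∑ t : S i, m t * p i (Function.update σ i t)

/-- `s` is strictly dominated in `R` by the mixed strategy `m`: against every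
joint strategy of the opponents from `R`, `m` has a strictly higher expected
payoff than `s`. -/
def MDominates {ι : Type*} [DecidableEq ι] {S : ι → Type*} [∀ i, Fintype (S i)]
    (p : ι → (∀ j, S j) → ℝ) (R : ∀ j, Finset (S j)) (i : ι)
    (m : S i → ℝ) (s : S i) : Prop :=
  ∀ σ : ∀ j, S j, (∀ j, j ≠ i → σ j ∈ R j) →
    p i (Function.update σ i s) < MixPay p i m σ

/-- Property (a): if `s` is strictly dominated in `R` by the convex combination
`(1-α)·δ_s + α·m` with `α ∈ (0,1]`, then `s` is strictly dominated in `R` by `m`. -/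
theorem mixed_dominance_property_a
    {ι : Type*} [Fintype ι] [DecidableEq ι] {S : ι → Type*}
    [∀ i, Fintype (S i)] [∀ i, Nonempty (S i)] [∀ i, DecidableEq (S i)]
    (p : ι → (∀ j, S j) → ℝ) (R : ∀ j, Finset (S j)) (hR : ∀ j, (R j).Nonempty)
    (i : ι) (s : S i) (hs : s ∈ R i)
    (m : S i → ℝ) (hm : Mixed R i m)
    (α : ℝ) (hα : α ∈ Set.Ioc (0 : ℝ) 1)
    (hdom : MDominates p R i
      (fun t => (1 - α) * (if t = s then 1 else 0) + α * m t) s) :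
    MDominates p R i m s := by
  intro σ hσ
  have h := hdom σ hσ
  have hkey : MixPay p i
      (fun t => (1 - α) * (if t = s then 1 else 0) + α * m t) σ
      = (1 - α) * p i (Function.update σ i s) + α * MixPay p i m σ := by
    unfold MixPay
    have : ∀ t : S i, ((1 - α) * (if t = s then 1 else 0) + α * m t) *
        p i (Function.update σ i t)
        = (if t = s then (1 - α) * p i (Function.update σ i s) else 0)
          + α * (m t * p i (Function.update σ i t)) := by
      intro t
      by_cases ht : t = s <;> simp [ht] <;> ring
    simp only [this, Finset.sum_add_distrib, Finset.sum_ite_eq',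
      Finset.mem_univ, if_true, Finset.mul_sum]
  rw [hkey] at h
  have hα0 : 0 < α := hα.1
  nlinarith
end

section
/- Property (b) of strict dominance by mixed strategies: let R be a restriction and let m_i, m'_i be mixed strategies of player i over R_i and s_i, s'_i ∈ R_i. If s_i is strictly dominated in R by m_i and s'_i is strictly dominated in R by m'_i, then s_i is strictly dominated in R by the substituted mixed strategy m_i[s'_i/m'_i], defined by m_i[s'_i/m'_i](t) = m_i(t) + m_i(s'_i)·m'_i(t) for t ≠ s'_i and m_i[s'_i/m'_i](s'_i) = m_i(s'_i)·m'_i(s'_i). -/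
open Finset

/-- Property (b): if `s` is strictly dominated in `R` by `m` and `s'` is
strictly dominated in `R` by `m'`, then `s` is strictly dominated in `R` by
the substituted mixed strategy `m[s'/m']`. -/
theorem mixed_dominance_property_b
    {ι : Type*} [Fintype ι] [DecidableEq ι] {S : ι → Type*}
    [∀ i, Fintype (S i)] [∀ i, Nonempty (S i)] [∀ i, DecidableEq (S i)]
    (p : ι → (∀ j, S j) → ℝ) (R : ∀ j, Finset (S j)) (hR : ∀ j, (R j).Nonempty)
    (i : ι) (s s' : S i) (hs : s ∈ R i) (hs' : s' ∈ R i)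
    (m m' : S i → ℝ) (hm : Mixed R i m) (hm' : Mixed R i m')
    (h1 : MDominates p R i m s) (h2 : MDominates p R i m' s') :
    MDominates p R i
      (fun t => if t = s' then m s' * m' s' else m t + m s' * m' t) s := by
  intro σ hσ
  have hd1 := h1 σ hσ
  have hd2 := h2 σ hσ
  have key : MixPay p i
      (fun t => if t = s' then m s' * m' s' else m t + m s' * m' t) σ
      = MixPay p i m σ + m s' * (MixPay p i m' σ - p i (Function.update σ i s')) := by
    unfold MixPay
    have hterm : ∀ t : S i,
        (if t = s' then m s' * m' s' else m t + m s' * m' t) *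
          p i (Function.update σ i t)
        = (m t * p i (Function.update σ i t)
            + m s' * (m' t * p i (Function.update σ i t)))
          - (if t = s' then m s' * p i (Function.update σ i t) else 0) := by
      intro t
      by_cases h : t = s' <;> simp [h] <;> ring
    rw [Finset.sum_congr rfl fun t _ => hterm t]
    rw [Finset.sum_sub_distrib, Finset.sum_add_distrib, ← Finset.mul_sum,
      Finset.sum_ite_eq' Finset.univ s' (fun t => m s' * p i (Function.update σ i t))]
    simp
    ring
  have hnn : 0 ≤ m s' * (MixPay p i m' σ - p i (Function.update σ i s')) :=
    mul_nonneg (hm.1 s') (by linarith)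
  linarith [key ▸ (by linarith : p i (Function.update σ i s) <
    MixPay p i m σ + m s' * (MixPay p i m' σ - p i (Function.update σ i s')))]
end

section
/- Let R be a restriction of a finite game and let t_i^1, ..., t_i^k be distinct strategies in R_i each of which is strictly dominated in R by some mixed strategy of player i over R_i. Then for every j ∈ {1,...,k} there exists a mixed strategy n_i^j over R_i such that t_i^j is strictly dominated in R by n_i^j and the support of n_i^j is disjoint from {t_i^1, ..., t_i^j}. -/
open Finset

lemma sum_ite_ne' {α : Type*} [Fintype α] [DecidableEq α] (s : α) (f : α → ℝ) :
    ∑ x : α, (if x = s then 0 else f x) = (∑ x : α, f x) - f s := by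
  have h : ∀ x : α, (if x = s then 0 else f x) = f x - (if x = s then f x else 0) := by
    intro x; split_ifs <;> simp
  simp_rw [h, Finset.sum_sub_distrib]
  rw [Finset.sum_ite_eq' Finset.univ s f, if_pos (Finset.mem_univ s)]

lemma subst_step {ι : Type*} [DecidableEq ι] {S : ι → Type*} [∀ i, Fintype (S i)]
    [∀ i, DecidableEq (S i)]
    (p : ι → (∀ j, S j) → ℝ) (R : ∀ j, Finset (S j)) (i : ι)
    {m n : S i → ℝ} {s u : S i}
    (hm : Mixed R i m) (hn : Mixed R i n) (hdn : MDominates p R i n s)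
    (hdm : MDominates p R i m u) :
    Mixed R i (fun x => (if x = s then 0 else m x) + m s * n x) ∧
    MDominates p R i (fun x => (if x = s then 0 else m x) + m s * n x) u := by
  obtain ⟨hm0, hmR, hm1⟩ := hm
  obtain ⟨hn0, hnR, hn1⟩ := hn
  constructor
  · refine ⟨?_, ?_, ?_⟩
    · intro x
      have := hm0 x
      have := hm0 s
      have := hn0 x
      positivity
    · intro x hx
      by_cases h : (if x = s then (0:ℝ) else m x) = 0
      · have hns : m s * n x ≠ 0 := by
          intro h0; apply hx; simp [h, h0]
        exact hnR x (right_ne_zero_of_mul hns)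
      · split_ifs at h with h'
        · exact absurd rfl h
        · exact hmR x h
    · rw [Finset.sum_add_distrib, sum_ite_ne' s m, ← Finset.mul_sum, hn1, hm1]
      ring
  · intro σ hσ
    have h1 := hdm σ hσ
    have h2 := hdn σ hσ
    have hms := hm0 s
    have key : MixPay p i (fun x => (if x = s then 0 else m x) + m s * n x) σ
        = (MixPay p i m σ - m s * p i (Function.update σ i s)) + m s * MixPay p i n σ := by
      unfold MixPay
      have h3 : ∀ x : S i, ((if x = s then 0 else m x) + m s * n x) * p i (Function.update σ i x)
          = (if x = s then 0 else m x * p i (Function.update σ i x))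
            + m s * (n x * p i (Function.update σ i x)) := by
        intro x; split_ifs <;> ring
      simp_rw [h3, Finset.sum_add_distrib, ← Finset.mul_sum,
        sum_ite_ne' s (fun x => m x * p i (Function.update σ i x))]
    rw [key]
    nlinarith [h1, h2, hms]

lemma renorm {ι : Type*} [DecidableEq ι] {S : ι → Type*} [∀ i, Fintype (S i)]
    [∀ i, DecidableEq (S i)]
    (p : ι → (∀ j, S j) → ℝ) (R : ∀ j, Finset (S j)) (hR : ∀ j, (R j).Nonempty)
    (i : ι) {m : S i → ℝ} {s : S i}
    (hm : Mixed R i m) (hd : MDominates p R i m s) :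
    ∃ n : S i → ℝ, Mixed R i n ∧ MDominates p R i n s ∧ n s = 0 ∧
      ∀ x, m x = 0 → n x = 0 := by
  obtain ⟨hm0, hmR, hm1⟩ := hm
  -- a profile with all components in R
  have hσ0 : ∃ σ : ∀ j, S j, ∀ j, σ j ∈ R j := by
    refine ⟨fun j => (hR j).choose, fun j => (hR j).choose_spec⟩
  obtain ⟨σ0, hσ0⟩ := hσ0
  have hc1 : m s < 1 := by
    by_contra hc
    push_neg at hc
    have heq : m s = 1 := le_antisymm (by
      calc m s ≤ ∑ x : S i, m x :=
            Finset.single_le_sum (fun x _ => hm0 x) (Finset.mem_univ s)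
        _ = 1 := hm1) hc
    have hsum : ∑ y ∈ Finset.univ.erase s, m y = 0 := by
      have h := Finset.add_sum_erase Finset.univ m (Finset.mem_univ s)
      rw [hm1] at h
      linarith
    have hz : ∀ x : S i, x ≠ s → m x = 0 := by
      intro x hx
      have := (Finset.sum_eq_zero_iff_of_nonneg (fun y _ => hm0 y)).mp hsum x
        (Finset.mem_erase.mpr ⟨hx, Finset.mem_univ x⟩)
      exact this
    have hmix : MixPay p i m σ0 = p i (Function.update σ0 i s) := by
      unfold MixPay
      rw [Finset.sum_eq_single s]
      · rw [heq, one_mul]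
      · intro x _ hx; rw [hz x hx, zero_mul]
      · intro h; exact absurd (Finset.mem_univ s) h
    have := hd σ0 (fun j _ => hσ0 j)
    rw [hmix] at this
    exact lt_irrefl _ this
  have h1c : (0:ℝ) < 1 - m s := by linarith
  refine ⟨fun x => (1 - m s)⁻¹ * (if x = s then 0 else m x), ⟨?_, ?_, ?_⟩, ?_, ?_, ?_⟩
  · intro x
    have := hm0 x
    have : (0:ℝ) ≤ (if x = s then 0 else m x) := by split_ifs <;> linarith
    positivity
  · intro x hx
    have h2 : (if x = s then (0:ℝ) else m x) ≠ 0 := by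
      intro h0; apply hx; simp only [h0, mul_zero]
    split_ifs at h2 with h'
    · exact absurd rfl h2
    · exact hmR x h2
  · rw [← Finset.mul_sum, sum_ite_ne' s m, hm1]
    field_simp
  · intro σ hσ
    have h := hd σ hσ
    have key : MixPay p i (fun x => (1 - m s)⁻¹ * (if x = s then 0 else m x)) σ
        = (1 - m s)⁻¹ * (MixPay p i m σ - m s * p i (Function.update σ i s)) := by
      unfold MixPay
      have h3 : ∀ x : S i, ((1 - m s)⁻¹ * (if x = s then 0 else m x)) * p i (Function.update σ i x)
          = (1 - m s)⁻¹ * (if x = s then 0 else m x * p i (Function.update σ i x)) := by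
        intro x; split_ifs <;> ring
      simp_rw [h3, ← Finset.mul_sum,
        sum_ite_ne' s (fun x => m x * p i (Function.update σ i x))]
    rw [key]
    have hA : p i (Function.update σ i s) * (1 - m s)
        < MixPay p i m σ - m s * p i (Function.update σ i s) := by linarith
    have h2 := mul_lt_mul_of_pos_left hA (inv_pos.mpr h1c)
    calc p i (Function.update σ i s)
        = (1 - m s)⁻¹ * (p i (Function.update σ i s) * (1 - m s)) := by field_simp
      _ < _ := h2
  · simp
  · intro x hx; simp [hx]

/-- If `t 1, ..., t k` are distinct strategies of player `i` in `R i`, each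
strictly dominated in `R` by some mixed strategy over `R i`, then for every
`j` there is a mixed strategy `n` over `R i` strictly dominating `t j` in `R`
whose support is disjoint from `{t 1, ..., t j}`. -/
theorem dominating_mixed_avoiding_dominated
    {ι : Type*} [Fintype ι] [DecidableEq ι] {S : ι → Type*}
    [∀ i, Fintype (S i)] [∀ i, Nonempty (S i)] [∀ i, DecidableEq (S i)]
    (p : ι → (∀ j, S j) → ℝ) (R : ∀ j, Finset (S j)) (hR : ∀ j, (R j).Nonempty)
    (i : ι) (k : ℕ) (t : Fin k → S i) (hinj : Function.Injective t)
    (htR : ∀ j, t j ∈ R i)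
    (hdom : ∀ j, ∃ m : S i → ℝ, Mixed R i m ∧ MDominates p R i m (t j)) :
    ∀ j : Fin k, ∃ n : S i → ℝ, Mixed R i n ∧ MDominates p R i n (t j) ∧
      ∀ l : Fin k, l ≤ j → n (t l) = 0 := by

  suffices H : ∀ N : ℕ, ∀ j : Fin k, (j : ℕ) < N →
      ∃ n : S i → ℝ, Mixed R i n ∧ MDominates p R i n (t j) ∧
        ∀ l : Fin k, l ≤ j → n (t l) = 0 by
    intro j; exact H ((j : ℕ) + 1) j (Nat.lt_succ_self _)
  intro N
  induction N with
  | zero => intro j hj; omega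
  | succ N IHN =>
    intro j hj
    obtain ⟨m0, hm0, hd0⟩ := hdom j
    have hjN : (j : ℕ) ≤ N := Nat.lt_succ_iff.mp hj
    have key : ∀ r : ℕ, ∀ hr : r < (j : ℕ),
        ∃ n : S i → ℝ, Mixed R i n ∧ MDominates p R i n (t ⟨r, hr.trans j.isLt⟩) ∧
          ∀ l : Fin k, l ≤ ⟨r, hr.trans j.isLt⟩ → n (t l) = 0 :=
      fun r hr => IHN ⟨r, hr.trans j.isLt⟩ (lt_of_lt_of_le hr hjN)
    let nl : ∀ r : ℕ, r < (j : ℕ) → (S i → ℝ) := fun r hr => Classical.choose (key r hr)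
    have nlspec : ∀ r (hr : r < (j : ℕ)), Mixed R i (nl r hr) ∧
        MDominates p R i (nl r hr) (t ⟨r, hr.trans j.isLt⟩) ∧
        ∀ l : Fin k, l ≤ ⟨r, hr.trans j.isLt⟩ → nl r hr (t l) = 0 :=
      fun r hr => Classical.choose_spec (key r hr)
    let F : ℕ → (S i → ℝ) := fun r => Nat.rec m0
      (fun r' mr => if h : r' < (j : ℕ) then
        (fun x => (if x = t ⟨r', h.trans j.isLt⟩ then 0 else mr x)
          + mr (t ⟨r', h.trans j.isLt⟩) * nl r' h x)
       else mr) r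
    have hFsucc : ∀ r (h : r < (j : ℕ)), F (r + 1) =
        fun x => (if x = t ⟨r, h.trans j.isLt⟩ then 0 else F r x)
          + F r (t ⟨r, h.trans j.isLt⟩) * nl r h x := by
      intro r h
      show (if h' : r < (j : ℕ) then _ else _) = _
      rw [dif_pos h]
    have inv : ∀ r : ℕ, r ≤ (j : ℕ) → Mixed R i (F r) ∧ MDominates p R i (F r) (t j) ∧
        ∀ l : Fin k, (l : ℕ) < r → F r (t l) = 0 := by
      intro r
      induction r with
      | zero => exact fun _ => ⟨hm0, hd0, fun l hl => absurd hl (Nat.not_lt_zero _)⟩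
      | succ r IHr =>
        intro hr
        have hrj : r < (j : ℕ) := hr
        obtain ⟨hmr, hdr, hzr⟩ := IHr hrj.le
        obtain ⟨hnl, hdnl, hznl⟩ := nlspec r hrj
        have hsub := subst_step p R i hmr hnl hdnl hdr
        rw [hFsucc r hrj]
        refine ⟨hsub.1, hsub.2, ?_⟩
        intro l hl
        by_cases hlr : (l : ℕ) = r
        · have hleq : l = ⟨r, hrj.trans j.isLt⟩ := Fin.ext hlr
          rw [hleq]
          simp [hznl ⟨r, hrj.trans j.isLt⟩ le_rfl]
        · have hlt : (l : ℕ) < r := by omega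
          have hne : t l ≠ t ⟨r, hrj.trans j.isLt⟩ :=
            fun h => hlr (congrArg Fin.val (hinj h))
          simp only [if_neg hne]
          rw [hzr l hlt, hznl l (Fin.le_def.mpr (le_of_lt hlt))]
          ring
    obtain ⟨hmF, hdF, hzF⟩ := inv (j : ℕ) le_rfl
    obtain ⟨n, hn, hdn, hns, hz⟩ := renorm p R hR i hmF hdF
    refine ⟨n, hn, hdn, ?_⟩
    intro l hl
    by_cases hlj : l = j
    · rw [hlj]; exact hns
    · have hlt : (l : ℕ) < (j : ℕ) :=
        lt_of_le_of_ne (Fin.le_def.mp hl) (fun h => hlj (Fin.ext h))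
      exact hz _ (hzF l hlt)
end

section
/- Persistence Lemma: assume R →_SM R' is a reduction step eliminating only strategies strictly dominated in R by mixed strategies over R, and assume a strategy s_i ∈ R_i is strictly dominated in R by some mixed strategy over R_i. Then s_i is strictly dominated in R by a mixed strategy whose support is contained in R'_i (i.e., by a mixed strategy from R'). -/
open Finset

/-- The reduction relation `R →_SM R'` of elimination of strategies strictly
dominated by mixed strategies. -/
def StepSM {ι : Type*} [DecidableEq ι] {S : ι → Type*} [∀ i, Fintype (S i)]
    (p : ι → (∀ j, S j) → ℝ) (R R' : ∀ j, Finset (S j)) : Prop :=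
  R ≠ R' ∧ (∀ j, R' j ⊆ R j) ∧
    ∀ j, ∀ s ∈ R j, s ∉ R' j → ∃ m : S j → ℝ, Mixed R j m ∧ MDominates p R j m s

/-- **Persistence Lemma**: if `R →_SM R'` and `s ∈ R i` is strictly dominated
in `R` by a mixed strategy over `R i`, then `s` is strictly dominated in `R`
by a mixed strategy whose support is contained in `R' i`. -/
theorem persistence_lemma
    {ι : Type*} [Fintype ι] [DecidableEq ι] {S : ι → Type*}
    [∀ i, Fintype (S i)] [∀ i, Nonempty (S i)] [∀ i, DecidableEq (S i)]
    (p : ι → (∀ j, S j) → ℝ) (R R' : ∀ j, Finset (S j))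
    (hR : ∀ j, (R j).Nonempty) (hR' : ∀ j, (R' j).Nonempty)
    (hstep : StepSM p R R')
    (i : ι) (s : S i) (hs : s ∈ R i)
    (hdom : ∃ m : S i → ℝ, Mixed R i m ∧ MDominates p R i m s) :
    ∃ m : S i → ℝ, Mixed R' i m ∧ MDominates p R i m s := by
  classical
  obtain ⟨m₀, hm₀mix, hm₀dom⟩ := hdom
  obtain ⟨-, hsub, helim⟩ := hstep
  -- the finite set of relevant opposing joint profiles
  set V : Finset (∀ j, S j) :=
    Finset.univ.filter (fun σ => ∀ j, j ≠ i → σ j ∈ R j) with hV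
  have hVne : V.Nonempty := by
    refine ⟨fun j => (hR j).choose, ?_⟩
    simp only [hV, Finset.mem_filter, Finset.mem_univ, true_and]
    exact fun j _ => (hR j).choose_spec
  have hcont : ∀ σ, Continuous (fun m : S i → ℝ => MixPay p i m σ) := by
    intro σ
    unfold MixPay
    exact continuous_finset_sum _ fun t _ => (continuous_apply t).mul continuous_const
  -- the compact set of candidate mixed strategies
  set K : Set (S i → ℝ) := {m | (∀ t, 0 ≤ m t) ∧ (∀ t, t ∉ R i → m t = 0) ∧
      (∑ t : S i, m t) = 1 ∧ ∀ σ ∈ V, MixPay p i m₀ σ ≤ MixPay p i m σ} with hK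
  have hm₀K : m₀ ∈ K := by
    refine ⟨hm₀mix.1, fun t ht => ?_, hm₀mix.2.2, fun σ _ => le_refl _⟩
    by_contra h
    exact ht (hm₀mix.2.1 t h)
  have hKclosed : IsClosed K := by
    have h1 : IsClosed {m : S i → ℝ | ∀ t, 0 ≤ m t} := by
      rw [Set.setOf_forall]
      exact isClosed_iInter fun t => isClosed_le continuous_const (continuous_apply t)
    have h2 : IsClosed {m : S i → ℝ | ∀ t, t ∉ R i → m t = 0} := by
      rw [Set.setOf_forall]
      refine isClosed_iInter fun t => ?_
      by_cases ht : t ∈ R i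
      · simp [ht]
      · simp only [ht, not_false_iff, true_implies]
        exact isClosed_eq (continuous_apply t) continuous_const
    have h3 : IsClosed {m : S i → ℝ | (∑ t : S i, m t) = 1} :=
      isClosed_eq (continuous_finset_sum _ fun t _ => continuous_apply t) continuous_const
    have h4 : IsClosed {m : S i → ℝ | ∀ σ ∈ V, MixPay p i m₀ σ ≤ MixPay p i m σ} := by
      rw [Set.setOf_forall]
      refine isClosed_iInter fun σ => ?_
      rw [Set.setOf_forall]
      exact isClosed_iInter fun _ => isClosed_le continuous_const (hcont σ)
    have : K = {m : S i → ℝ | ∀ t, 0 ≤ m t} ∩ {m | ∀ t, t ∉ R i → m t = 0} ∩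
        {m | (∑ t : S i, m t) = 1} ∩ {m | ∀ σ ∈ V, MixPay p i m₀ σ ≤ MixPay p i m σ} := by
      ext m; simp only [hK, Set.mem_setOf_eq, Set.mem_inter_iff]; tauto
    rw [this]
    exact ((h1.inter h2).inter h3).inter h4
  have hKcompact : IsCompact K := by
    refine (isCompact_univ_pi fun _ : S i => isCompact_Icc (a := (0:ℝ)) (b := 1)).of_isClosed_subset
      hKclosed ?_
    intro m hm
    rw [Set.mem_univ_pi]
    intro t
    refine ⟨hm.1 t, ?_⟩
    calc m t ≤ ∑ u : S i, m u := Finset.single_le_sum (fun u _ => hm.1 u) (Finset.mem_univ t)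
    _ = 1 := hm.2.2.1
  -- eliminated-weight function and total-payoff function
  set D : Finset (S i) := Finset.univ.filter (fun t => t ∉ R' i) with hD
  set f : (S i → ℝ) → ℝ := fun m => ∑ t ∈ D, m t with hf
  have hfcont : Continuous f := continuous_finset_sum _ fun t _ => continuous_apply t
  set g : (S i → ℝ) → ℝ := fun m => ∑ σ ∈ V, MixPay p i m σ with hg
  have hgcont : Continuous g := continuous_finset_sum _ fun σ _ => hcont σ
  obtain ⟨m₁, hm₁K, hm₁min⟩ := hKcompact.exists_isMinOn ⟨m₀, hm₀K⟩ hfcont.continuousOn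
  set K₂ : Set (S i → ℝ) := K ∩ {m | f m = f m₁} with hK₂
  have hK₂compact : IsCompact K₂ :=
    hKcompact.inter_right (isClosed_eq hfcont continuous_const)
  obtain ⟨m₂, hm₂K₂, hm₂max⟩ := hK₂compact.exists_isMaxOn ⟨m₁, hm₁K, rfl⟩ hgcont.continuousOn
  obtain ⟨hm₂K, hm₂f⟩ := hm₂K₂
  -- main claim: the optimal strategy has no weight on eliminated strategies
  have hfzero : f m₂ = 0 := by
    by_contra hne0
    have hfpos : 0 < f m₂ := lt_of_le_of_ne (Finset.sum_nonneg fun t _ => hm₂K.1 t) (Ne.symm hne0)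
    obtain ⟨t, htD, htpos⟩ : ∃ t ∈ D, 0 < m₂ t := by
      by_contra h
      push_neg at h
      have : f m₂ = 0 := Finset.sum_eq_zero fun t ht => le_antisymm (h t ht) (hm₂K.1 t)
      exact hne0 this
    have htR' : t ∉ R' i := by
      simpa [hD] using htD
    have htR : t ∈ R i := by
      by_contra h
      exact absurd (hm₂K.2.1 t h) htpos.ne'
    obtain ⟨mt, hmtmix, hmtdom⟩ := helim i t htR htR'
    -- substitute the dominating mixture mt for t
    set m' : S i → ℝ := fun u => m₂ u - (if u = t then m₂ t else 0) + m₂ t * mt u with hm'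
    have hkey : ∀ σ, MixPay p i m' σ =
        MixPay p i m₂ σ + m₂ t * (MixPay p i mt σ - p i (Function.update σ i t)) := by
      intro σ
      simp only [MixPay, hm', sub_mul, add_mul, ite_mul, zero_mul,
        Finset.sum_add_distrib, Finset.sum_sub_distrib, Finset.sum_ite_eq',
        Finset.mem_univ, if_true, mul_assoc, ← Finset.mul_sum]
      ring
    have hm'K : m' ∈ K := by
      refine ⟨?_, ?_, ?_, ?_⟩
      · intro u
        by_cases hu : u = t
        · subst hu
          simp only [hm', if_true]
          have := mul_nonneg htpos.le (hmtmix.1 u)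
          linarith
        · simp only [hm', hu, if_false]
          have := mul_nonneg htpos.le (hmtmix.1 u)
          have := hm₂K.1 u
          linarith
      · intro u hu
        have h1 : m₂ u = 0 := hm₂K.2.1 u hu
        have h2 : mt u = 0 := by
          by_contra h
          exact hu (hmtmix.2.1 u h)
        have hut : u ≠ t := fun h => hu (h ▸ htR)
        simp [hm', h1, h2, hut]
      · simp only [hm', Finset.sum_add_distrib, Finset.sum_sub_distrib,
          Finset.sum_ite_eq', Finset.mem_univ, if_true, ← Finset.mul_sum,
          hm₂K.2.2.1, hmtmix.2.2]
        ring
      · intro σ hσ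
        have hσ' : ∀ j, j ≠ i → σ j ∈ R j := by
          simpa [hV] using hσ
        have hd := hmtdom σ hσ'
        have := hm₂K.2.2.2 σ hσ
        rw [hkey σ]
        nlinarith
    -- f does not increase
    have hfm' : f m' ≤ f m₂ := by
      have htD' : t ∈ D := htD
      have hsum : ∑ u ∈ D, mt u ≤ 1 := by
        rw [← hmtmix.2.2]
        exact Finset.sum_le_sum_of_subset_of_nonneg (Finset.subset_univ D)
          (fun u _ _ => hmtmix.1 u)
      have : f m' = f m₂ - m₂ t + m₂ t * ∑ u ∈ D, mt u := by
        simp only [hf, hm', Finset.sum_add_distrib, Finset.sum_sub_distrib,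
          Finset.sum_ite_eq', htD', if_true, ← Finset.mul_sum]
      rw [this]
      nlinarith
    have hfm'' : f m' = f m₁ := by
      have h1 : f m₁ ≤ f m' := isMinOn_iff.mp hm₁min m' hm'K
      have h2 : f m' ≤ f m₁ := hm₂f ▸ hfm'
      linarith
    have hm'K₂ : m' ∈ K₂ := ⟨hm'K, hfm''⟩
    -- but g strictly increases: contradiction
    have hglt : g m₂ < g m' := by
      have : g m' = g m₂ + m₂ t * ∑ σ ∈ V, (MixPay p i mt σ - p i (Function.update σ i t)) := by
        simp only [hg, hkey, Finset.sum_add_distrib, ← Finset.mul_sum]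
      rw [this]
      have hpos : 0 < ∑ σ ∈ V, (MixPay p i mt σ - p i (Function.update σ i t)) := by
        refine Finset.sum_pos (fun σ hσ => ?_) hVne
        have hσ' : ∀ j, j ≠ i → σ j ∈ R j := by
          simpa [hV] using hσ
        linarith [hmtdom σ hσ']
      nlinarith
    exact absurd (isMaxOn_iff.mp hm₂max m' hm'K₂) (not_le.mpr hglt)
  -- conclude
  refine ⟨m₂, ⟨hm₂K.1, fun t ht => ?_, hm₂K.2.2.1⟩, fun σ hσ => ?_⟩
  · by_contra h
    have htD : t ∈ D := by simp [hD, h]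
    have : m₂ t = 0 := by
      have := Finset.sum_eq_zero_iff_of_nonneg (fun u _ => hm₂K.1 u) |>.mp hfzero t htD
      exact this
    exact ht this
  · have hσV : σ ∈ V := by
      simp only [hV, Finset.mem_filter, Finset.mem_univ, true_and]
      exact hσ
    calc p i (Function.update σ i s) < MixPay p i m₀ σ := hm₀dom σ hσ
    _ ≤ MixPay p i m₂ σ := hm₂K.2.2.2 σ hσV
end

section
/- Strict dominance by a mixed strategy is a hereditary dominance relation: if R →_SM R' is a reduction step eliminating only strategies strictly dominated in R by mixed strategies over R, and a strategy s_i present in R' is strictly dominated in R by a mixed strategy over R_i, then s_i is strictly dominated in R' by a mixed strategy over R'_i. -/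
open Finset

/-!
Among the mixed strategies over `R i`, which form a compact set, choose one maximising the
worst-case margin over `s` against the finitely many opponent profiles from `R'`; this margin is
positive because it is at least that of the given dominating strategy. If the maximiser put weight
on a strategy `t` eliminated by the step, moving that weight onto a mixed strategy dominating `t`
in `R` would raise the payoff against every such profile, hence the margin. So the maximiser is a
mixed strategy over `R' i`.
-/

theorem IsCompact.exists_mem_forall_lt_of_forall_exists_improving {E α : Type*}
    [TopologicalSpace E] {K : Set E} (hK : IsCompact K) {T : Finset α} (hT : T.Nonempty)
    {g : α → E → ℝ} (hg : ∀ a ∈ T, ContinuousOn (g a) K) {P : E → Prop}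
    (himp : ∀ x ∈ K, ¬ P x → ∃ y ∈ K, ∀ a ∈ T, g a x < g a y)
    {c : ℝ} {x₀ : E} (hx₀ : x₀ ∈ K) (hc : ∀ a ∈ T, c < g a x₀) :
    ∃ x ∈ K, P x ∧ ∀ a ∈ T, c < g a x := by
  obtain ⟨x, hxK, hmax⟩ := hK.exists_isMaxOn ⟨x₀, hx₀⟩ (ContinuousOn.finset_inf'_apply hT hg)
  have hcx : c < T.inf' hT (g · x) := ((lt_inf'_iff hT).2 hc).trans_le (hmax hx₀)
  refine ⟨x, hxK, ?_, fun a ha => hcx.trans_le (inf'_le _ ha)⟩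
  by_contra hPx
  obtain ⟨y, hyK, hxy⟩ := himp x hxK hPx
  have hxy' : T.inf' hT (g · x) < T.inf' hT (g · y) :=
    (lt_inf'_iff hT).2 fun a ha => (inf'_le _ ha).trans_lt (hxy a ha)
  exact (hmax hyK).not_gt hxy'

section Mixed

variable {ι : Type*} {S : ι → Type*} [∀ i, Fintype (S i)]

theorem isCompact_setOf_mixed (R : ∀ j, Finset (S j)) (i : ι) :
    IsCompact {m : S i → ℝ | Mixed R i m} := by
  have hK : {m : S i → ℝ | Mixed R i m} =
      stdSimplex ℝ (S i) ∩ ⋂ (t) (_ : t ∉ R i), {m | m t = 0} := by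
    ext m
    simp only [Mixed, stdSimplex, Set.mem_ofPred_eq, Set.mem_inter_iff, Set.mem_iInter]
    grind
  rw [hK]
  exact (isCompact_stdSimplex ℝ (S i)).inter_right <| isClosed_iInter fun t =>
    isClosed_iInter fun _ => isClosed_eq (continuous_apply t) continuous_const

/-- The mixed strategy obtained from `m` by moving the weight of `t` onto `mt`. -/
theorem Mixed.transfer {R : ∀ j, Finset (S j)} {i : ι} [DecidableEq (S i)] {m mt : S i → ℝ}
    (hm : Mixed R i m) (hmt : Mixed R i mt) (t : S i) :
    Mixed R i (m - Pi.single t (m t) + m t • mt) := by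
  refine ⟨fun u => ?_, fun u hu => ?_, ?_⟩
  · by_cases hut : u = t
    · subst hut
      simpa using mul_nonneg (hm.1 u) (hmt.1 u)
    · simpa [hut] using add_nonneg (hm.1 u) (mul_nonneg (hm.1 t) (hmt.1 u))
  · by_contra huR
    have hmu : m u = 0 := by_contra fun h => huR (hm.2.1 u h)
    have hmtu : mt u = 0 := by_contra fun h => huR (hmt.2.1 u h)
    apply hu
    by_cases hut : u = t
    · subst hut
      simp [hmu]
    · simp [hut, hmu, hmtu]
  · simp [sum_add_distrib, sum_sub_distrib, ← mul_sum, hm.2.2, hmt.2.2]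

end Mixed

section MixPay

variable {ι : Type*} [DecidableEq ι] {S : ι → Type*} [∀ i, Fintype (S i)]
  {p : ι → (∀ j, S j) → ℝ} {i : ι}

theorem continuous_mixPay (σ : ∀ j, S j) : Continuous fun m => MixPay p i m σ := by
  unfold MixPay
  fun_prop

variable [DecidableEq (S i)]

theorem mixPay_transfer (m mt : S i → ℝ) (t : S i) (σ : ∀ j, S j) :
    MixPay p i (m - Pi.single t (m t) + m t • mt) σ =
      MixPay p i m σ + m t * (MixPay p i mt σ - p i (Function.update σ i t)) := by
  change (m - Pi.single t (m t) + m t • mt) ⬝ᵥ _ = m ⬝ᵥ _ + m t * (mt ⬝ᵥ _ - _)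
  rw [add_dotProduct, sub_dotProduct, single_dotProduct, smul_dotProduct, smul_eq_mul]
  ring

theorem MDominates.exists_mixed_mixPay_lt {R : ∀ j, Finset (S j)} {m mt : S i → ℝ} {t : S i}
    (hdom : MDominates p R i mt t) (hmt : Mixed R i mt) (hm : Mixed R i m) (ht : m t ≠ 0) :
    ∃ m', Mixed R i m' ∧
      ∀ σ : ∀ j, S j, (∀ j, j ≠ i → σ j ∈ R j) → MixPay p i m σ < MixPay p i m' σ := by
  refine ⟨_, hm.transfer hmt t, fun σ hσ => ?_⟩
  rw [mixPay_transfer]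
  have := mul_pos ((hm.1 t).lt_of_ne' ht) (sub_pos.2 (hdom σ hσ))
  linarith

end MixPay

theorem mixed_strict_dominance_hereditary_general
    {ι : Type*} [Fintype ι] [DecidableEq ι] {S : ι → Type*}
    [∀ i, Fintype (S i)]
    (p : ι → (∀ j, S j) → ℝ) (R R' : ∀ j, Finset (S j))
    (hR' : ∀ j, (R' j).Nonempty)
    (hstep : StepSM p R R')
    (i : ι) (s : S i)
    (hdom : ∃ m : S i → ℝ, Mixed R i m ∧ MDominates p R i m s) :
    ∃ m : S i → ℝ, Mixed R' i m ∧ MDominates p R' i m s := by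
  classical
  obtain ⟨-, hsub, hstep⟩ := hstep
  obtain ⟨m₀, hm₀, hdom₀⟩ := hdom
  set T := univ.filter fun σ : ∀ j, S j => ∀ j, j ≠ i → σ j ∈ R' j
  have hT : T.Nonempty := ⟨fun j => (hR' j).choose, by simp [T, fun j => (hR' j).choose_spec]⟩
  have hTR : ∀ σ ∈ T, ∀ j, j ≠ i → σ j ∈ R j := fun σ hσ j hj =>
    hsub j ((mem_filter.1 hσ).2 j hj)
  set margin := fun σ m => MixPay p i m σ - p i (Function.update σ i s)
  have himprove : ∀ m ∈ {m | Mixed R i m}, ¬ (∀ t, m t ≠ 0 → t ∈ R' i) →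
      ∃ m' ∈ {m | Mixed R i m}, ∀ σ ∈ T, margin σ m < margin σ m' := by
    intro m hm hP
    push Not at hP
    obtain ⟨t, ht, htR'⟩ := hP
    obtain ⟨mt, hmt, hmtdom⟩ := hstep i t (hm.2.1 t ht) htR'
    obtain ⟨m', hm', hlt⟩ := hmtdom.exists_mixed_mixPay_lt hmt hm ht
    exact ⟨m', hm', fun σ hσ => sub_lt_sub_right (hlt σ (hTR σ hσ)) _⟩
  obtain ⟨m, hm, hmR', hmdom⟩ :=
    (isCompact_setOf_mixed R i).exists_mem_forall_lt_of_forall_exists_improving hT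
      (fun σ _ => ((continuous_mixPay σ).sub continuous_const).continuousOn) himprove hm₀
      (c := 0) (fun σ hσ => sub_pos.2 (hdom₀ σ (hTR σ hσ)))
  exact ⟨m, ⟨hm.1, hmR', hm.2.2⟩, fun σ hσ => sub_pos.1 (hmdom σ (by simpa [T] using hσ))⟩

/-- Strict dominance by a mixed strategy is hereditary: if `R →_SM R'` and a
strategy present in `R'` is strictly dominated in `R` by a mixed strategy over
`R i`, then it is strictly dominated in `R'` by a mixed strategy over `R' i`. -/
theorem mixed_strict_dominance_hereditary
    {ι : Type*} [Fintype ι] [DecidableEq ι] {S : ι → Type*}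
    [∀ i, Fintype (S i)] [∀ i, Nonempty (S i)] [∀ i, DecidableEq (S i)]
    (p : ι → (∀ j, S j) → ℝ) (R R' : ∀ j, Finset (S j))
    (hR : ∀ j, (R j).Nonempty) (hR' : ∀ j, (R' j).Nonempty)
    (hstep : StepSM p R R')
    (i : ι) (s : S i) (hs : s ∈ R' i)
    (hdom : ∃ m : S i → ℝ, Mixed R i m ∧ MDominates p R i m s) :
    ∃ m : S i → ℝ, Mixed R' i m ∧ MDominates p R' i m s :=
  mixed_strict_dominance_hereditary_general p R R' hR' hstep i s hdom
end

section
/- Iterated elimination of strategies strictly dominated by mixed strategies in a finite strategic game is order independent: all iterations of →_SM starting in the initial game G end in the same final restriction. -/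
open Finset

section Aux

variable {ι : Type*} [Fintype ι] [DecidableEq ι] {S : ι → Type*}
  [∀ i, Fintype (S i)] [∀ i, DecidableEq (S i)]
  (p : ι → (∀ j, S j) → ℝ)

lemma stepSM_nonempty {R R' : ∀ j, Finset (S j)} (hne : ∀ j, (R j).Nonempty)
    (h : StepSM p R R') : ∀ j, (R' j).Nonempty := by
  classical
  intro j
  choose σ0 hσ0 using hne
  obtain ⟨b, hb, hmax⟩ := Finset.exists_max_image (R j)
    (fun t => p j (Function.update σ0 j t)) ⟨σ0 j, hσ0 j⟩
  refine ⟨b, ?_⟩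
  by_contra hbn
  obtain ⟨m, hm, hdom⟩ := h.2.2 j b hb hbn
  have h1 := hdom σ0 (fun k _ => hσ0 k)
  have h2 : MixPay p j m σ0 ≤ p j (Function.update σ0 j b) := by
    have hle : ∀ t ∈ (Finset.univ : Finset (S j)),
        m t * p j (Function.update σ0 j t) ≤ m t * p j (Function.update σ0 j b) := by
      intro t _
      by_cases ht : m t = 0
      · simp [ht]
      · exact mul_le_mul_of_nonneg_left (hmax t (hm.2.1 t ht)) (hm.1 t)
    calc MixPay p j m σ0 ≤ ∑ t : S j, m t * p j (Function.update σ0 j b) :=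
          Finset.sum_le_sum hle
      _ = p j (Function.update σ0 j b) := by rw [← Finset.sum_mul, hm.2.2, one_mul]
  linarith

lemma exists_undominated_dominating {R : ∀ j, Finset (S j)} (hne : ∀ k, (R k).Nonempty)
    (j : ι) (s : S j) (m0 : S j → ℝ) (hm0 : Mixed R j m0) (hd0 : MDominates p R j m0 s) :
    ∃ m : S j → ℝ, Mixed R j m ∧ MDominates p R j m s ∧
      ∀ t, m t ≠ 0 → ∀ md, Mixed R j md → ¬ MDominates p R j md t := by
  classical
  set Sf : Finset (∀ k, S k) :=
    Finset.univ.filter (fun σ => ∀ k, k ≠ j → σ k ∈ R k) with hSf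
  have hSmem : ∀ σ : ∀ k, S k, σ ∈ Sf ↔ ∀ k, k ≠ j → σ k ∈ R k := by
    intro σ; simp [hSf]
  have hSne : Sf.Nonempty := by
    choose σ0 hσ0 using hne
    exact ⟨σ0, (hSmem σ0).2 fun k _ => hσ0 k⟩
  set M : Set (S j → ℝ) :=
    {m | Mixed R j m ∧ ∀ σ ∈ Sf, MixPay p j m0 σ ≤ MixPay p j m σ} with hM
  have hcontMP : ∀ σ, Continuous (fun m : S j → ℝ => MixPay p j m σ) := fun σ =>
    continuous_finset_sum _ fun t _ => (continuous_apply t).mul continuous_const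
  have hMclosed : IsClosed M := by
    have h1 : M = (⋂ t : S j, {m : S j → ℝ | 0 ≤ m t}) ∩
        ((⋂ t ∈ {t : S j | t ∉ R j}, {m : S j → ℝ | m t = 0}) ∩
         ({m : S j → ℝ | ∑ t : S j, m t = 1} ∩
          ⋂ σ ∈ (Sf : Set (∀ k, S k)), {m : S j → ℝ | MixPay p j m0 σ ≤ MixPay p j m σ})) := by
      ext m
      simp only [hM, Set.mem_setOf_eq, Set.mem_inter_iff, Set.mem_iInter, Finset.mem_coe]
      constructor
      · rintro ⟨⟨h1, h2, h3⟩, h4⟩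
        exact ⟨h1, fun t ht => by_contra fun h0 => ht (h2 t h0), h3, fun σ hσ => h4 σ hσ⟩
      · rintro ⟨h1, h2, h3, h4⟩
        exact ⟨⟨h1, fun t ht => by_contra fun h0 => ht (h2 t h0), h3⟩, fun σ hσ => h4 σ hσ⟩
    rw [h1]
    exact (isClosed_iInter fun t => isClosed_le continuous_const (continuous_apply t)).inter
      ((isClosed_biInter fun t _ => isClosed_eq (continuous_apply t) continuous_const).inter
       ((isClosed_eq (continuous_finset_sum _ fun t _ => continuous_apply t)
          continuous_const).inter
        (isClosed_biInter fun σ _ => isClosed_le continuous_const (hcontMP σ))))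
  have hsub : M ⊆ Set.pi Set.univ fun _ : S j => Set.Icc (0:ℝ) 1 := by
    intro m hm t _
    refine ⟨hm.1.1 t, ?_⟩
    calc m t ≤ ∑ t' : S j, m t' :=
          Finset.single_le_sum (fun t' _ => hm.1.1 t') (Finset.mem_univ t)
      _ = 1 := hm.1.2.2
  have hMcompact : IsCompact M :=
    (isCompact_univ_pi fun _ => isCompact_Icc).of_isClosed_subset hMclosed hsub
  have hMne : M.Nonempty := ⟨m0, hm0, fun σ _ => le_refl _⟩
  set Φ : (S j → ℝ) → ℝ := fun m => ∑ σ ∈ Sf, MixPay p j m σ with hΦdef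
  have hΦc : Continuous Φ := continuous_finset_sum _ fun σ _ => hcontMP σ
  obtain ⟨m, hmM, hmax⟩ := hMcompact.exists_isMaxOn hMne hΦc.continuousOn
  refine ⟨m, hmM.1, ?_, ?_⟩
  · intro σ hσ
    have h1 := hmM.2 σ ((hSmem σ).2 hσ)
    have h2 := hd0 σ hσ
    linarith
  · intro t ht md hmd hdmd
    have hmt : 0 < m t := lt_of_le_of_ne (hmM.1.1 t) (Ne.symm ht)
    set m' : S j → ℝ := fun t' => m t' + m t * (md t' - if t' = t then 1 else 0) with hm'
    have hδ : ∀ f : S j → ℝ, ∑ t' : S j, (if t' = t then (1:ℝ) else 0) * f t' = f t := by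
      intro f; simp [ite_mul]
    have hMP : ∀ σ, MixPay p j m' σ =
        MixPay p j m σ + m t * (MixPay p j md σ - p j (Function.update σ j t)) := by
      intro σ
      have e1 : ∀ t' ∈ (Finset.univ : Finset (S j)),
          m' t' * p j (Function.update σ j t')
          = m t' * p j (Function.update σ j t')
            + (m t * (md t' * p j (Function.update σ j t'))
              - m t * ((if t' = t then (1:ℝ) else 0) * p j (Function.update σ j t'))) := by
        intro t' _; simp only [hm']; ring
      simp only [MixPay]
      rw [Finset.sum_congr rfl e1, Finset.sum_add_distrib, Finset.sum_sub_distrib,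
        ← Finset.mul_sum, ← Finset.mul_sum, hδ]
      ring
    have hm'M : m' ∈ M := by
      refine ⟨⟨?_, ?_, ?_⟩, ?_⟩
      · intro t'
        by_cases h : t' = t
        · subst h
          have e : m' t' = m t' * md t' := by simp only [hm', eq_self_iff_true, if_true]; ring
          rw [e]; exact mul_nonneg (hmM.1.1 _) (hmd.1 _)
        · have e : m' t' = m t' + m t * md t' := by simp only [hm', if_neg h]; ring
          rw [e]; exact add_nonneg (hmM.1.1 _) (mul_nonneg hmt.le (hmd.1 _))
      · intro t' h
        by_contra hR
        have h1 : m t' = 0 := by by_contra h0; exact hR (hmM.1.2.1 t' h0)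
        have h2 : md t' = 0 := by by_contra h0; exact hR (hmd.2.1 t' h0)
        have h3 : t' ≠ t := by rintro rfl; exact hR (hmM.1.2.1 _ ht)
        apply h; simp [hm', h1, h2, h3]
      · have e1 : ∀ t' ∈ (Finset.univ : Finset (S j)),
            m' t' = m t' + (m t * md t' - m t * (if t' = t then (1:ℝ) else 0)) := by
          intro t' _; simp only [hm']; ring
        rw [Finset.sum_congr rfl e1, Finset.sum_add_distrib, Finset.sum_sub_distrib,
          ← Finset.mul_sum, ← Finset.mul_sum, hmM.1.2.2, hmd.2.2]
        simp
      · intro σ hσ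
        have h1 := hmM.2 σ hσ
        have h2 := hdmd σ (fun k hk => (hSmem σ).1 hσ k hk)
        rw [hMP σ]
        nlinarith
    have hΦ' : Φ m' = Φ m + m t * ∑ σ ∈ Sf,
        (MixPay p j md σ - p j (Function.update σ j t)) := by
      simp only [hΦdef]
      rw [Finset.sum_congr rfl fun σ _ => hMP σ, Finset.sum_add_distrib, ← Finset.mul_sum]
    have hpos : 0 < ∑ σ ∈ Sf, (MixPay p j md σ - p j (Function.update σ j t)) :=
      Finset.sum_pos (fun σ hσ => sub_pos.2 (hdmd σ fun k hk => (hSmem σ).1 hσ k hk)) hSne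
    have hle : Φ m' ≤ Φ m := hmax hm'M
    rw [hΦ'] at hle
    nlinarith

lemma stepSM_confluent {a b c : ∀ j, Finset (S j)} (ha : ∀ j, (a j).Nonempty)
    (hab : StepSM p a b) (hac : StepSM p a c) :
    Relation.ReflGen (fun A B : ∀ j, Finset (S j) =>
      (∀ j, (A j).Nonempty) ∧ StepSM p A B) b (fun j => b j ∩ c j) := by
  by_cases hbd : b = fun j => b j ∩ c j
  · exact hbd ▸ Relation.ReflGen.refl
  · refine Relation.ReflGen.single ⟨stepSM_nonempty p ha hab, hbd, fun j => inter_subset_left, ?_⟩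
    intro j s hsb hsd
    have hsc : s ∉ c j := fun h => hsd (Finset.mem_inter.2 ⟨hsb, h⟩)
    have hsa : s ∈ a j := hab.2.1 j hsb
    obtain ⟨m0, hm0, hd0⟩ := hac.2.2 j s hsa hsc
    obtain ⟨m, hm, hdm, hsupp⟩ := exists_undominated_dominating p ha j s m0 hm0 hd0
    have hsuppb : ∀ t, m t ≠ 0 → t ∈ b j := by
      intro t htm
      by_contra htb
      obtain ⟨md, hmd, hdd⟩ := hab.2.2 j t (hm.2.1 t htm) htb
      exact hsupp t htm md hmd hdd
    exact ⟨m, ⟨hm.1, hsuppb, hm.2.2⟩, fun σ hσ => hdm σ fun k hk => hab.2.1 k (hσ k hk)⟩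

end Aux

/-- Iterated elimination of strategies strictly dominated by mixed strategies
in a finite strategic game is order independent: any two outcomes of iterating
`→_SM` from the initial game `G` (the full restriction) coincide. -/
theorem mixed_strict_dominance_order_independent
    {ι : Type*} [Fintype ι] [DecidableEq ι] {S : ι → Type*}
    [∀ i, Fintype (S i)] [∀ i, Nonempty (S i)] [∀ i, DecidableEq (S i)]
    (p : ι → (∀ j, S j) → ℝ) :
    ∀ R R' : ∀ j, Finset (S j),
      (Relation.ReflTransGen (StepSM p) (fun _ => Finset.univ) R ∧
        ∀ R'', ¬ StepSM p R R'') →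
      (Relation.ReflTransGen (StepSM p) (fun _ => Finset.univ) R' ∧
        ∀ R'', ¬ StepSM p R' R'') →
      R = R' := by
  classical
  set r : (∀ j, Finset (S j)) → (∀ j, Finset (S j)) → Prop :=
    fun A B => (∀ j, (A j).Nonempty) ∧ StepSM p A B with hr
  have hlift : ∀ A B : ∀ j, Finset (S j), Relation.ReflTransGen (StepSM p) A B →
      (∀ j, (A j).Nonempty) → Relation.ReflTransGen r A B := by
    intro A B h
    induction h using Relation.ReflTransGen.head_induction_on with
    | refl => intro _; exact Relation.ReflTransGen.refl
    | head hstep htail ih =>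
        intro hA
        exact Relation.ReflTransGen.head ⟨hA, hstep⟩ (ih (stepSM_nonempty p hA hstep))
  have hcr : ∀ A B C : ∀ j, Finset (S j), r A B → r A C →
      ∃ D, Relation.ReflGen r B D ∧ Relation.ReflTransGen r C D := by
    rintro A B C ⟨hA, hAB⟩ ⟨-, hAC⟩
    refine ⟨fun j => B j ∩ C j, stepSM_confluent p hA hAB hAC, ?_⟩
    have h2 := stepSM_confluent p hA hAC hAB
    have heq : (fun j => C j ∩ B j) = fun j => B j ∩ C j := by
      funext j; exact Finset.inter_comm _ _
    exact (heq ▸ h2).to_reflTransGen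
  intro R R' hR hR'
  obtain ⟨hRreach, hRnf⟩ := hR
  obtain ⟨hR'reach, hR'nf⟩ := hR'
  have huniv : ∀ j : ι, ((Finset.univ : Finset (S j))).Nonempty := fun j => Finset.univ_nonempty
  obtain ⟨d, hRd, hR'd⟩ := Relation.church_rosser hcr
    (hlift _ _ hRreach huniv) (hlift _ _ hR'reach huniv)
  have h1 : R = d := by
    rcases hRd.cases_head with h | ⟨b, hb, -⟩
    · exact h
    · exact absurd hb.2 (hRnf b)
  have h2 : R' = d := by
    rcases hR'd.cases_head with h | ⟨b, hb, -⟩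
    · exact h
    · exact absurd hb.2 (hR'nf b)
  rw [h1, h2]
end

section
/- Inherent dominance is a hereditary dominance relation: if R →_I R' is a reduction step eliminating only strategies that are inherently dominated in R, and a strategy s_i present in R' is inherently dominated in R, then s_i is inherently dominated in R'. -/
/-- `s` is weakly dominated (for player `i`, with dominators drawn from `Q`)
given the set `T` of joint strategies of the opponents (encoded as full
profiles): some `s' ∈ Q` is at least as good against every element of `T` and
strictly better against some element of `T`. -/
def WDominatedGiven {ι : Type*} [DecidableEq ι] {S : ι → Type*}
    (p : ι → (∀ j, S j) → ℝ) (i : ι) (Q : Finset (S i))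
    (T : Set (∀ j, S j)) (s : S i) : Prop :=
  ∃ s' ∈ Q, (∀ σ ∈ T, p i (Function.update σ i s) ≤ p i (Function.update σ i s')) ∧
    ∃ σ ∈ T, p i (Function.update σ i s) < p i (Function.update σ i s')

/-- `s` is inherently dominated in the restriction `R`: for every nonempty
subset `T` of the joint strategies of the opponents from `R`, `s` is weakly
dominated given `T` (with dominators from `R i`). -/
def InherentlyDominated {ι : Type*} [DecidableEq ι] {S : ι → Type*}
    (p : ι → (∀ j, S j) → ℝ) (R : ∀ j, Finset (S j)) (i : ι) (s : S i) : Prop :=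
  ∀ T : Set (∀ j, S j), T.Nonempty → (∀ σ ∈ T, ∀ j, j ≠ i → σ j ∈ R j) →
    WDominatedGiven p i (R i) T s

/-- The reduction relation `R →_I R'` of elimination of inherently dominated
strategies. -/
def StepI {ι : Type*} [DecidableEq ι] {S : ι → Type*}
    (p : ι → (∀ j, S j) → ℝ) (R R' : ∀ j, Finset (S j)) : Prop :=
  R ≠ R' ∧ (∀ j, R' j ⊆ R j) ∧ ∀ j, ∀ s ∈ R j, s ∉ R' j → InherentlyDominated p R j s

/-- Inherent dominance is hereditary: if `R →_I R'` and a strategy present in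
`R'` is inherently dominated in `R`, then it is inherently dominated in `R'`. -/
theorem inherent_dominance_hereditary
    {ι : Type*} [Fintype ι] [DecidableEq ι] {S : ι → Type*}
    [∀ i, Fintype (S i)] [∀ i, Nonempty (S i)]
    (p : ι → (∀ j, S j) → ℝ) (R R' : ∀ j, Finset (S j))
    (hR : ∀ j, (R j).Nonempty) (hR' : ∀ j, (R' j).Nonempty)
    (hstep : StepI p R R')
    (i : ι) (s : S i) (hs : s ∈ R' i) (hdom : InherentlyDominated p R i s) :
    InherentlyDominated p R' i s := by
  classical
  intro T hT hTmem
  have hTmemR : ∀ σ ∈ T, ∀ j, j ≠ i → σ j ∈ R j :=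
    fun σ hσ j hj => hstep.2.1 j (hTmem σ hσ j hj)
  set Tf := (Set.toFinite T).toFinset with hTfdef
  have hTfmem : ∀ σ, σ ∈ Tf ↔ σ ∈ T := fun σ => Set.Finite.mem_toFinset _
  have hTfne : Tf.Nonempty := by
    obtain ⟨σ, hσ⟩ := hT; exact ⟨σ, (hTfmem σ).2 hσ⟩
  set v : S i → ℝ := fun x => ∑ σ ∈ Tf, p i (Function.update σ i x) with hv
  set D : Finset (S i) := (R i).filter
    (fun x => (∀ σ ∈ T, p i (Function.update σ i s) ≤ p i (Function.update σ i x)) ∧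
      ∃ σ ∈ T, p i (Function.update σ i s) < p i (Function.update σ i x)) with hD
  have hDne : D.Nonempty := by
    obtain ⟨s', hs'R, hw, hst⟩ := hdom T hT hTmemR
    exact ⟨s', Finset.mem_filter.2 ⟨hs'R, hw, hst⟩⟩
  obtain ⟨b, hbD, hbmax⟩ := D.exists_max_image v hDne
  obtain ⟨hbR, hbw, hbst⟩ := Finset.mem_filter.1 hbD
  have hbR' : b ∈ R' i := by
    by_contra hb
    obtain ⟨c, hcR, hcw, σ₀, hσ₀, hcst⟩ := hstep.2.2 i b hbR hb T hT hTmemR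
    have hcD : c ∈ D := by
      refine Finset.mem_filter.2 ⟨hcR, fun σ hσ => le_trans (hbw σ hσ) (hcw σ hσ), σ₀, hσ₀,
        lt_of_le_of_lt (hbw σ₀ hσ₀) hcst⟩
    have : v b < v c := by
      refine Finset.sum_lt_sum (fun σ hσ => hcw σ ((hTfmem σ).1 hσ)) ⟨σ₀, (hTfmem σ₀).2 hσ₀, hcst⟩
    exact absurd (hbmax c hcD) (not_le.2 this)
  exact ⟨b, hbR', hbw, hbst⟩
end
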